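/- Let (L, Δ, S) be a locality and define O_p(L) = ⋂{S_w : w ∈ W(L)}. Then O_p(L) is the unique largest subgroup of S that is a partial normal subgroup of L. -/

import Mathlib

universe u

structure PartialGroupOn (L : Type u) : Type u where
  nonempty : Nonempty L
  D : Set (List L)
  Pi : List L → L
  inv : L → L
  mem_single : ∀ x : L, [x] ∈ D
  mem_append_left : ∀ u v : List L, u ++ v ∈ D → u ∈ D
  mem_append_right : ∀ u v : List L, u ++ v ∈ D → v ∈ D
  Pi_single : ∀ x : L, Pi [x] = x
  mem_assoc : ∀ u v w : List L, u ++ v ++ w ∈ D → u ++ [Pi v] ++ w ∈ D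
  Pi_assoc : ∀ u v w : List L, u ++ v ++ w ∈ D →
    Pi (u ++ v ++ w) = Pi (u ++ [Pi v] ++ w)
  inv_inv : ∀ x : L, inv (inv x) = x
  mem_inv : ∀ w ∈ D, (w.reverse.map inv) ++ w ∈ D
  Pi_inv : ∀ w ∈ D, Pi ((w.reverse.map inv) ++ w) = Pi []

namespace PartialGroupOn

variable {L : Type u} (M : PartialGroupOn L)

/-- The inverse of a word: reverse the word and invert each entry. -/
def wordInv (w : List L) : List L := w.reverse.map M.inv

/-- The identity element `1 = Π(∅)`. -/
def one : L := M.Pi []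

/-- Conjugation `x ↦ x^g = Π(g⁻¹, x, g)`. -/
def conj (x g : L) : L := M.Pi [M.inv g, x, g]

/-- `D(g)` is the set of `x` for which `x^g` is defined. -/
def Dg (g : L) : Set L := {x | [M.inv g, x, g] ∈ M.D}

/-- A partial subgroup: a nonempty subset closed under inversion and under the
product applied to words in `D` with entries in the subset. -/
def IsPartialSubgroup (H : Set L) : Prop :=
  H.Nonempty ∧ (∀ x ∈ H, M.inv x ∈ H) ∧
    ∀ w : List L, (∀ x ∈ w, x ∈ H) → w ∈ M.D → M.Pi w ∈ H

/-- A partial normal subgroup of `L`. -/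
def IsPartialNormal (N : Set L) : Prop :=
  M.IsPartialSubgroup N ∧
    ∀ x ∈ N, ∀ g : L, [M.inv g, x, g] ∈ M.D → M.conj x g ∈ N

/-- A subgroup of `L`: a partial subgroup `H` with `W(H) ⊆ D`. -/
def IsSubgroup (H : Set L) : Prop :=
  M.IsPartialSubgroup H ∧ ∀ w : List L, (∀ x ∈ w, x ∈ H) → w ∈ M.D

/-- `X ⊆ D(g)`, i.e. `X^g` is defined. -/
def setConjDef (X : Set L) (g : L) : Prop := ∀ x ∈ X, [M.inv g, x, g] ∈ M.D

/-- The conjugate set `X^g`. -/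
def setConj (X : Set L) (g : L) : Set L := {y | ∃ x ∈ X, y = M.conj x g}

/-- `viaChain Δ w X` says that `w = (g₁,…,gₙ)` is in `D` via the chain
`X = X₀, X₁ = X₀^{g₁}, …` of members of `Δ`. -/
def viaChain (Δ : Set (Set L)) : List L → Set L → Prop
  | [], X => X ∈ Δ
  | g :: w, X => X ∈ Δ ∧ M.setConjDef X g ∧ viaChain Δ w (M.setConj X g)

/-- `(L, Δ)` is an objective partial group: every member of `Δ` is a subgroup,
(O1) `D = D_Δ`, and (O2) the overgroup-closure condition. -/
def Objective (Δ : Set (Set L)) : Prop :=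
  (∀ X ∈ Δ, M.IsSubgroup X) ∧
  (M.D = {w | ∃ X : Set L, M.viaChain Δ w X}) ∧
  (∀ X ∈ Δ, ∀ Y ∈ Δ, ∀ g : L, M.setConjDef X g → M.IsSubgroup (M.setConj X g) →
    M.setConj X g ⊆ Y →
    ∀ Z : Set L, M.IsSubgroup Z → M.setConj X g ⊆ Z → Z ⊆ Y → Z ∈ Δ)

/-- The normalizer `N_L(X) = {g : X^g = X}`. -/
def normalizer (X : Set L) : Set L := {g | M.setConjDef X g ∧ M.setConj X g = X}

/-- `S_g = {x ∈ D(g) ∩ S : x^g ∈ S}`. -/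
def Sg (S : Set L) (g : L) : Set L :=
  {x | x ∈ S ∧ [M.inv g, x, g] ∈ M.D ∧ M.conj x g ∈ S}

/-- `S_w`: the set of `x ∈ S` successively conjugated into `S` by the entries
of the word `w`. -/
def Sw (S : Set L) : List L → Set L
  | [] => S
  | g :: w => {x | x ∈ S ∧ [M.inv g, x, g] ∈ M.D ∧ M.conj x g ∈ Sw S w}

/-- A `p`-subgroup: a subgroup whose cardinality is a power of `p`. -/
def IsPSubgroup (p : ℕ) (H : Set L) : Prop :=
  M.IsSubgroup H ∧ ∃ n : ℕ, Nat.card H = p ^ n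

/-- `(L, Δ, S)` is a locality. -/
def IsLocality (p : ℕ) (Δ : Set (Set L)) (S : Set L) : Prop :=
  p.Prime ∧ Finite L ∧ S ∈ Δ ∧ (∀ X ∈ Δ, X ⊆ S) ∧ M.Objective Δ ∧
    M.IsPSubgroup p S ∧
    ∀ H : Set L, M.IsPSubgroup p H → S ⊆ H → H = S

/-- The product set `XY` of two subsets of `L`. -/
def setProd (X Y : Set L) : Set L :=
  {z | ∃ a ∈ X, ∃ b ∈ Y, [a, b] ∈ M.D ∧ z = M.Pi [a, b]}

/-- A homomorphism of partial groups. -/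
def IsHom {L' : Type u} (M' : PartialGroupOn L') (β : L → L') : Prop :=
  (∀ w ∈ M.D, w.map β ∈ M'.D) ∧ ∀ w ∈ M.D, β (M.Pi w) = M'.Pi (w.map β)

end PartialGroupOn

/-!
`O_p(L) = ⋂_w S_w` is the largest subset of `S` on which every conjugation map `c_g` is defined
and which every `c_g` maps back into itself; hence it is closed under conjugation, and a partial
normal subgroup `X ⊆ S` lies in it as soon as `X ⊆ S_g` for all `g`.

Two facts carry the proof. First, `S_g` is a subgroup of `S` and `c_g` is multiplicative on it:
an object `P` with `P^g ∈ Δ` stays such an object after conjugation by elements of `S_g`, which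
yields chains through `Δ` witnessing, by (O1), the words needed to compute `(xy)^g = x^g y^g`.
Second, if `z ∈ S` normalizes `S_g` then `(g⁻¹, z, g) ∈ D` via the chain
`S_g^g → S_g → S_g → S_g^g`, so for `X` partial normal `N_X(S_g) ≤ S_g`; as `X ⊴ S` and `S` is a
`p`-group, the normalizer condition in `XS_g` forces `X ≤ S_g`.
-/

theorem Subgroup.le_of_inf_normalizer_le {G : Type*} [Group G] [Group.IsNilpotent G]
    {N T : Subgroup G} [N.Normal] (h : N ⊓ Subgroup.normalizer (T : Set G) ≤ T) : N ≤ T := by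
  by_contra hNT
  have hTJ : T ≤ N ⊔ T := le_sup_right
  have hlt : T.subgroupOf (N ⊔ T) < ⊤ := lt_top_iff_ne_top.2 fun htop =>
    hNT (le_sup_left.trans (Subgroup.subgroupOf_eq_top.1 htop))
  obtain ⟨n, hn, hnT⟩ := SetLike.exists_of_lt (Group.normalizerCondition_of_isNilpotent _ hlt)
  rw [← Subgroup.subgroupOf_normalizer_eq hTJ, Subgroup.mem_subgroupOf] at hn
  obtain ⟨y, hy, z, hz, hyz⟩ := Subgroup.mem_sup_of_normal_left.1 n.2
  have hyT : y ∈ T := h ⟨hy, by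
    rw [eq_mul_inv_of_mul_eq hyz]
    exact mul_mem hn (T.le_normalizer (inv_mem hz))⟩
  exact hnT (Subgroup.mem_subgroupOf.2 (hyz ▸ mul_mem hyT hz))

namespace PartialGroupOn

variable {L : Type u} {M : PartialGroupOn L}

section Words

variable {u v w : List L} {x y : L}

lemma mem_of_isInfix (h : w ∈ M.D) (hv : v <:+: w) : v ∈ M.D := by
  obtain ⟨s, t, rfl⟩ := hv
  exact M.mem_append_right s v (M.mem_append_left (s ++ v) t h)

lemma mem_insert_one (h : u ++ v ∈ M.D) : u ++ [M.one] ++ v ∈ M.D :=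
  M.mem_assoc u [] v (by rwa [List.append_nil])

lemma Pi_insert_one (h : u ++ v ∈ M.D) : M.Pi (u ++ [M.one] ++ v) = M.Pi (u ++ v) := by
  have e := M.Pi_assoc u [] v (by rwa [List.append_nil])
  rw [List.append_nil] at e
  exact e.symm

lemma Pi_delete_of_Pi_eq_one {v' : List L} (h : u ++ v' ++ w ∈ M.D) (hv' : M.Pi v' = M.one)
    (huw : u ++ w ∈ M.D) : M.Pi (u ++ v' ++ w) = M.Pi (u ++ w) := by
  rw [M.Pi_assoc u v' w h, hv', Pi_insert_one huw]

lemma Pi_cons {a : L} (h : a :: w ∈ M.D) : M.Pi (a :: w) = M.Pi [a, M.Pi w] := by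
  simpa using M.Pi_assoc [a] w [] (by simpa using h)

lemma Pi_one_left (x : L) : M.Pi [M.one, x] = x :=
  (Pi_insert_one (u := []) (M.mem_single x)).trans (M.Pi_single x)

lemma Pi_one_right (x : L) : M.Pi [x, M.one] = x :=
  (Pi_insert_one (u := [x]) (v := []) (M.mem_single x)).trans (M.Pi_single x)

lemma inv_mul_mem (x : L) : [M.inv x, x] ∈ M.D := M.mem_inv [x] (M.mem_single x)

lemma Pi_inv_mul (x : L) : M.Pi [M.inv x, x] = M.one := M.Pi_inv [x] (M.mem_single x)

lemma Pi_mul_inv (x : L) : M.Pi [x, M.inv x] = M.one := by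
  simpa [M.inv_inv] using Pi_inv_mul (M := M) (M.inv x)

lemma eq_inv_of_Pi_pair_eq_one (h : [x, y] ∈ M.D) (h1 : M.Pi [x, y] = M.one) :
    y = M.inv x := by
  have h3 : [M.inv x, x, y] ∈ M.D := mem_of_isInfix (M.mem_inv _ h) ⟨[M.inv y], [], rfl⟩
  calc y = M.Pi [y] := (M.Pi_single y).symm
    _ = M.Pi [M.inv x, x, y] :=
      (Pi_delete_of_Pi_eq_one (u := []) h3 (Pi_inv_mul x) (M.mem_single y)).symm
    _ = M.Pi [M.inv x] := Pi_delete_of_Pi_eq_one (u := [M.inv x]) (w := []) h3 h1 (M.mem_single _)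
    _ = M.inv x := M.Pi_single _

lemma Pi_pair_inv_rev (h : [x, y] ∈ M.D) : M.inv (M.Pi [x, y]) = M.Pi [M.inv y, M.inv x] := by
  have h4 : [M.inv y, M.inv x, x, y] ∈ M.D := M.mem_inv _ h
  have h2 : [M.Pi [M.inv y, M.inv x], M.Pi [x, y]] ∈ M.D :=
    M.mem_assoc [_] [x, y] [] (M.mem_assoc [] [M.inv y, M.inv x] [x, y] h4)
  have h1 : M.Pi [M.Pi [M.inv y, M.inv x], M.Pi [x, y]] = M.one :=
    calc _ = M.Pi [M.Pi [M.inv y, M.inv x], x, y] :=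
          (M.Pi_assoc [_] [x, y] [] (M.mem_assoc [] [M.inv y, M.inv x] [x, y] h4)).symm
      _ = M.Pi [M.inv y, M.inv x, x, y] := (M.Pi_assoc [] [M.inv y, M.inv x] [x, y] h4).symm
      _ = M.one := M.Pi_inv _ h
  rw [eq_inv_of_Pi_pair_eq_one h2 h1, M.inv_inv]

lemma Pi_inv_mul_cancel_left (h : [x, y] ∈ M.D) :
    [M.inv x, M.Pi [x, y]] ∈ M.D ∧ M.Pi [M.inv x, M.Pi [x, y]] = y := by
  have h3 : [M.inv x, x, y] ∈ M.D := mem_of_isInfix (M.mem_inv _ h) ⟨[M.inv y], [], rfl⟩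
  refine ⟨M.mem_assoc [_] [x, y] [] h3, ?_⟩
  calc M.Pi [M.inv x, M.Pi [x, y]] = M.Pi [M.inv x, x, y] := (M.Pi_assoc [_] [x, y] [] h3).symm
    _ = M.Pi [y] := Pi_delete_of_Pi_eq_one (u := []) h3 (Pi_inv_mul x) (M.mem_single y)
    _ = y := M.Pi_single y

end Words

section Conj

variable {X : Set L} {g x y : L}

lemma inv_append_conj_word (h : [M.inv g, x, g] ∈ M.D) :
    [M.inv g, M.inv x, g, M.inv g, x, g] ∈ M.D ∧
      M.Pi [M.inv g, M.inv x, g, M.inv g, x, g] = M.one := by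
  have e : [M.inv g, x, g].reverse.map M.inv ++ [M.inv g, x, g] =
      [M.inv g, M.inv x, g, M.inv g, x, g] := by simp [M.inv_inv]
  exact e ▸ ⟨M.mem_inv _ h, M.Pi_inv _ h⟩

lemma conj_inv (h : [M.inv g, x, g] ∈ M.D) :
    [M.inv g, M.inv x, g] ∈ M.D ∧ M.conj (M.inv x) g = M.inv (M.conj x g) := by
  obtain ⟨h6, e6⟩ := inv_append_conj_word h
  have h4 : [M.conj (M.inv x) g, M.inv g, x, g] ∈ M.D :=
    M.mem_assoc [] [M.inv g, M.inv x, g] [M.inv g, x, g] h6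
  have h1 : M.Pi [M.conj (M.inv x) g, M.conj x g] = M.one :=
    calc _ = M.Pi [M.conj (M.inv x) g, M.inv g, x, g] :=
          (M.Pi_assoc [_] [M.inv g, x, g] [] h4).symm
      _ = M.Pi [M.inv g, M.inv x, g, M.inv g, x, g] :=
          (M.Pi_assoc [] [M.inv g, M.inv x, g] [M.inv g, x, g] h6).symm
      _ = M.one := e6
  have h2 : [M.conj (M.inv x) g, M.conj x g] ∈ M.D := M.mem_assoc [_] [M.inv g, x, g] [] h4
  refine ⟨mem_of_isInfix h6 ⟨[], [M.inv g, x, g], rfl⟩, ?_⟩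
  rw [eq_inv_of_Pi_pair_eq_one h2 h1, M.inv_inv]

lemma conj_one_left (g : L) : [M.inv g, M.one, g] ∈ M.D ∧ M.conj M.one g = M.one :=
  ⟨mem_insert_one (u := [M.inv g]) (inv_mul_mem g),
    (Pi_insert_one (u := [M.inv g]) (v := [g]) (inv_mul_mem g)).trans (Pi_inv_mul g)⟩

lemma mem_conj_sandwich (h : [M.inv g, x, g] ∈ M.D) : [g, M.inv g, x, g, M.inv g] ∈ M.D := by
  have h6 := (inv_append_conj_word h).1
  have h12 : [M.inv g, M.inv x, g, M.inv g, x, g, M.inv g, M.inv x, g, M.inv g, x, g] ∈ M.D := by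
    simpa [M.inv_inv] using M.mem_inv _ h6
  exact mem_of_isInfix h12 ⟨[M.inv g, M.inv x], [M.inv x, g, M.inv g, x, g], rfl⟩

lemma mem_pair_of_mem_conj (h : [M.inv g, x, g] ∈ M.D) : [x, g] ∈ M.D :=
  mem_of_isInfix (mem_conj_sandwich h) ⟨[g, M.inv g], [M.inv g], rfl⟩

lemma Pi_mul_conj (h : [M.inv g, x, g] ∈ M.D) :
    [g, M.conj x g] ∈ M.D ∧ M.Pi [g, M.conj x g] = M.Pi [x, g] := by
  have h4 : [g, M.inv g, x, g] ∈ M.D := mem_of_isInfix (mem_conj_sandwich h) ⟨[], [M.inv g], rfl⟩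
  refine ⟨M.mem_assoc [g] [M.inv g, x, g] [] h4, ?_⟩
  calc M.Pi [g, M.conj x g] = M.Pi [g, M.inv g, x, g] := (M.Pi_assoc [g] [M.inv g, x, g] [] h4).symm
    _ = M.Pi [x, g] := Pi_delete_of_Pi_eq_one (u := []) h4 (Pi_mul_inv g)
        (mem_of_isInfix h4 ⟨[g, M.inv g], [], rfl⟩)

lemma conj_inv_eq_Pi (y g : L) : M.conj y (M.inv g) = M.Pi [g, y, M.inv g] := by
  simp only [conj, M.inv_inv]

lemma conj_conj_inv (h : [M.inv g, x, g] ∈ M.D) :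
    [M.inv (M.inv g), M.conj x g, M.inv g] ∈ M.D ∧ M.conj (M.conj x g) (M.inv g) = x := by
  have h5 := mem_conj_sandwich h
  have h3 : [x, g, M.inv g] ∈ M.D := mem_of_isInfix h5 ⟨[g, M.inv g], [], rfl⟩
  rw [M.inv_inv, conj_inv_eq_Pi]
  refine ⟨M.mem_assoc [g] [M.inv g, x, g] [M.inv g] h5, ?_⟩
  calc M.Pi [g, M.conj x g, M.inv g] = M.Pi [g, M.inv g, x, g, M.inv g] :=
        (M.Pi_assoc [g] [M.inv g, x, g] [M.inv g] h5).symm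
    _ = M.Pi [x, g, M.inv g] := Pi_delete_of_Pi_eq_one (u := []) h5 (Pi_mul_inv g) h3
    _ = M.Pi [x] := Pi_delete_of_Pi_eq_one (u := [x]) (w := []) h3 (Pi_mul_inv g) (M.mem_single x)
    _ = x := M.Pi_single x

lemma conj_Pi_pair (h4 : [M.inv g, x, y, g] ∈ M.D) (h6 : [M.inv g, x, g, M.inv g, y, g] ∈ M.D) :
    [M.inv g, M.Pi [x, y], g] ∈ M.D ∧ M.conj (M.Pi [x, y]) g = M.Pi [M.conj x g, M.conj y g] := by
  have h4' : [M.conj x g, M.inv g, y, g] ∈ M.D :=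
    M.mem_assoc [] [M.inv g, x, g] [M.inv g, y, g] h6
  refine ⟨M.mem_assoc [M.inv g] [x, y] [g] h4, ?_⟩
  calc M.conj (M.Pi [x, y]) g = M.Pi [M.inv g, x, y, g] := (M.Pi_assoc [M.inv g] [x, y] [g] h4).symm
    _ = M.Pi [M.inv g, x, g, M.inv g, y, g] :=
        (Pi_delete_of_Pi_eq_one (u := [M.inv g, x]) (w := [y, g]) h6 (Pi_mul_inv g) h4).symm
    _ = M.Pi [M.conj x g, M.inv g, y, g] := M.Pi_assoc [] [M.inv g, x, g] [M.inv g, y, g] h6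
    _ = M.Pi [M.conj x g, M.conj y g] := M.Pi_assoc [_] [M.inv g, y, g] [] h4'

lemma setConjDef_setConj_inv (hX : M.setConjDef X g) :
    M.setConjDef (M.setConj X g) (M.inv g) := by
  rintro _ ⟨x, hx, rfl⟩
  exact (conj_conj_inv (hX x hx)).1

lemma setConj_setConj_inv (hX : M.setConjDef X g) : M.setConj (M.setConj X g) (M.inv g) = X := by
  ext y
  constructor
  · rintro ⟨_, ⟨x, hx, rfl⟩, rfl⟩
    rwa [(conj_conj_inv (hX x hx)).2]
  · intro hy
    exact ⟨M.conj y g, ⟨y, hy, rfl⟩, (conj_conj_inv (hX y hy)).2.symm⟩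

end Conj

namespace IsSubgroup

variable {H X T : Set L} {a x y : L} (hH : M.IsSubgroup H)
include hH

lemma word_mem {w : List L} (hw : ∀ z ∈ w, z ∈ H) : w ∈ M.D := hH.2 w hw

lemma Pi_mem {w : List L} (hw : ∀ z ∈ w, z ∈ H) : M.Pi w ∈ H := hH.1.2.2 w hw (hH.2 w hw)

lemma inv_mem (hx : x ∈ H) : M.inv x ∈ H := hH.1.2.1 x hx

lemma one_mem : M.one ∈ H := hH.Pi_mem (w := []) (by simp)

lemma mul_mem (hx : x ∈ H) (hy : y ∈ H) : M.Pi [x, y] ∈ H := hH.Pi_mem (by simp [hx, hy])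

lemma conj_mem (hx : x ∈ H) (ha : a ∈ H) : M.conj x a ∈ H :=
  hH.Pi_mem (by simp [hx, ha, hH.inv_mem ha])

lemma setConjDef_of_subset (hX : X ⊆ H) (ha : a ∈ H) : M.setConjDef X a := fun x hx =>
  hH.word_mem (by simp [hX hx, ha, hH.inv_mem ha])

lemma setConj_subset (hX : X ⊆ H) (ha : a ∈ H) : M.setConj X a ⊆ H := by
  rintro _ ⟨x, hx, rfl⟩
  exact hH.conj_mem (hX hx) ha

lemma setConj_self (ha : a ∈ H) : M.setConj H a = H := by
  refine (hH.setConj_subset subset_rfl ha).antisymm fun y hy => ?_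
  have h : [M.inv (M.inv a), y, M.inv a] ∈ M.D :=
    hH.setConjDef_of_subset subset_rfl (hH.inv_mem ha) y hy
  refine ⟨M.conj y (M.inv a), hH.conj_mem hy (hH.inv_mem ha), ?_⟩
  simpa [M.inv_inv] using (conj_conj_inv h).2.symm

lemma conj_mul (hx : x ∈ H) (hy : y ∈ H) (ha : a ∈ H) :
    M.conj (M.Pi [x, y]) a = M.Pi [M.conj x a, M.conj y a] :=
  (conj_Pi_pair (hH.word_mem (by simp [hx, hy, ha, hH.inv_mem ha]))
    (hH.word_mem (by simp [hx, hy, ha, hH.inv_mem ha]))).2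

lemma of_subset (hTH : T ⊆ H) (hne : T.Nonempty) (hinv : ∀ x ∈ T, M.inv x ∈ T)
    (hmul : ∀ x ∈ T, ∀ y ∈ T, M.Pi [x, y] ∈ T) : M.IsSubgroup T := by
  have hword : ∀ w : List L, (∀ x ∈ w, x ∈ T) → w ∈ M.D := fun w hw =>
    hH.word_mem fun x hx => hTH (hw x hx)
  refine ⟨⟨hne, hinv, fun w hw _ => ?_⟩, hword⟩
  induction w with
  | nil =>
    obtain ⟨x, hx⟩ := hne
    have h1 := hmul x hx _ (hinv x hx)
    rwa [Pi_mul_inv] at h1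
  | cons a v ih =>
    have hv : ∀ x ∈ v, x ∈ T := fun x hx => hw x (List.mem_cons_of_mem a hx)
    rw [Pi_cons (hword _ hw)]
    exact hmul a (hw a List.mem_cons_self) _ (ih hv (hword v hv))

lemma setConj_isSubgroup (hX : M.IsSubgroup X) (hXH : X ⊆ H) (ha : a ∈ H) :
    M.IsSubgroup (M.setConj X a) := by
  refine hH.of_subset (hH.setConj_subset hXH ha) ?_ ?_ ?_
  · obtain ⟨x, hx⟩ := hX.1.1
    exact ⟨_, x, hx, rfl⟩
  · rintro _ ⟨x, hx, rfl⟩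
    exact ⟨M.inv x, hX.inv_mem hx, (conj_inv (hH.setConjDef_of_subset hXH ha x hx)).2.symm⟩
  · rintro _ ⟨x, hx, rfl⟩ _ ⟨y, hy, rfl⟩
    exact ⟨M.Pi [x, y], hX.mul_mem hx hy, (hH.conj_mul (hXH hx) (hXH hy) ha).symm⟩

abbrev group : Group H where
  mul a b := ⟨M.Pi [a, b], hH.mul_mem a.2 b.2⟩
  one := ⟨M.one, hH.one_mem⟩
  inv a := ⟨M.inv a, hH.inv_mem a.2⟩
  mul_assoc a b c := Subtype.ext <| by
    have h3 : [a.1, b.1, c.1] ∈ M.D := hH.word_mem (by simp)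
    exact (M.Pi_assoc [] [a.1, b.1] [c.1] h3).symm.trans (M.Pi_assoc [a.1] [b.1, c.1] [] h3)
  one_mul a := Subtype.ext (Pi_one_left a.1)
  mul_one a := Subtype.ext (Pi_one_right a.1)
  inv_mul_cancel a := Subtype.ext (Pi_inv_mul a.1)

end IsSubgroup

lemma IsPSubgroup.subset_of_normalizer_subset {p : ℕ} {S X T : Set L} (hp : p.Prime)
    (hS : M.IsPSubgroup p S) (hX : M.IsSubgroup X) (hXS : X ⊆ S)
    (hXn : ∀ x ∈ X, ∀ a ∈ S, M.conj x a ∈ X) (hT : M.IsSubgroup T) (hTS : T ⊆ S)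
    (hXT : ∀ z ∈ X, M.setConj T z = T → z ∈ T) : X ⊆ T := by
  let _ : Group S := hS.1.group
  have hconj (a b : S) : M.conj a b = ((b⁻¹ * a * b : S) : L) :=
    M.Pi_assoc [] [M.inv b, a] [b] (hS.1.word_mem (by simp [a.2, b.2, hS.1.inv_mem b.2]))
  let subgroupOf {Y : Set L} (hY : M.IsSubgroup Y) : Subgroup S :=
    { carrier := {a | a.1 ∈ Y}
      mul_mem' := fun ha hb => hY.mul_mem ha hb
      one_mem' := hY.one_mem
      inv_mem' := fun ha => hY.inv_mem ha }
  have : Fact p.Prime := ⟨hp⟩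
  obtain ⟨n, hn⟩ := hS.2
  have : Finite S := Nat.finite_of_card_ne_zero (by simp [hn, hp.ne_zero])
  have : Group.IsNilpotent S := (IsPGroup.of_card hn).isNilpotent
  have : (subgroupOf hX).Normal := ⟨fun x hx a => by
    change ((a * x * a⁻¹ : S) : L) ∈ X
    simpa [hconj] using hXn x hx (a⁻¹ : S) (a⁻¹ : S).2⟩
  have hle : subgroupOf hX ≤ subgroupOf hT := by
    refine Subgroup.le_of_inf_normalizer_le fun z ⟨hzX, hzT⟩ => hXT z hzX ?_
    ext y
    constructor
    · rintro ⟨t, ht, rfl⟩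
      change M.conj (⟨t, hTS ht⟩ : S) z ∈ T
      rw [hconj]
      have h := (Subgroup.mem_normalizer_iff.1 (inv_mem hzT) ⟨t, hTS ht⟩).1 ht
      rwa [_root_.inv_inv] at h
    · intro hy
      refine ⟨_, (Subgroup.mem_normalizer_iff.1 hzT ⟨y, hTS hy⟩).1 hy, ?_⟩
      rw [hconj]
      simp [mul_assoc]
  exact fun x hx => hle (show (⟨x, hXS hx⟩ : S) ∈ subgroupOf hX from hx)

section Chains

variable {Δ : Set (Set L)} {X : Set L} {w : List L} {a b g x : L}

lemma viaChain_cons (hX : M.viaChain Δ [g] X) (hw : M.viaChain Δ w (M.setConj X g)) :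
    M.viaChain Δ (g :: w) X :=
  ⟨hX.1, hX.2.1, hw⟩

lemma viaChain_inv_cons (hX : M.viaChain Δ [g] X) (hw : M.viaChain Δ w X) :
    M.viaChain Δ (M.inv g :: w) (M.setConj X g) :=
  ⟨hX.2.2, setConjDef_setConj_inv hX.2.1, (setConj_setConj_inv hX.2.1).symm ▸ hw⟩

namespace Objective

variable (hobj : M.Objective Δ)
include hobj

lemma mem_D_of_viaChain (h : M.viaChain Δ w X) : w ∈ M.D := hobj.2.1 ▸ ⟨X, h⟩

lemma exists_viaChain (g : L) : ∃ X, M.viaChain Δ [g] X := by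
  have h := M.mem_single g
  rwa [hobj.2.1] at h

lemma conj_Pi_pair_of_viaChain (hc : M.viaChain Δ [a, b] X) (hx : x ∈ X) :
    [M.inv (M.Pi [a, b]), x, M.Pi [a, b]] ∈ M.D ∧
      M.conj x (M.Pi [a, b]) = M.conj (M.conj x a) b := by
  have hab := hobj.mem_D_of_viaChain hc
  have hX := hobj.1 X hc.1
  have hXx : M.viaChain Δ [x] X := ⟨hc.1, hX.setConjDef_of_subset subset_rfl hx,
    (hX.setConj_self hx).symm ▸ hc.1⟩
  have ha : M.viaChain Δ [a] X := ⟨hc.1, hc.2.1, hc.2.2.1⟩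
  have h5 : [M.inv b, M.inv a, x, a, b] ∈ M.D := hobj.mem_D_of_viaChain
    (viaChain_inv_cons hc.2.2 (viaChain_inv_cons ha (viaChain_cons hXx
      ((hX.setConj_self hx).symm ▸ hc))))
  have h4 : [M.Pi [M.inv b, M.inv a], x, a, b] ∈ M.D :=
    M.mem_assoc [] [M.inv b, M.inv a] [x, a, b] h5
  have h3 : [M.Pi [M.inv b, M.inv a], x, M.Pi [a, b]] ∈ M.D := M.mem_assoc [_, x] [a, b] [] h4
  rw [← Pi_pair_inv_rev hab] at h3
  refine ⟨h3, ?_⟩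
  calc M.conj x (M.Pi [a, b]) = M.Pi [M.Pi [M.inv b, M.inv a], x, M.Pi [a, b]] := by
        rw [← Pi_pair_inv_rev hab]; rfl
    _ = M.Pi [M.Pi [M.inv b, M.inv a], x, a, b] := (M.Pi_assoc [_, x] [a, b] [] h4).symm
    _ = M.Pi [M.inv b, M.inv a, x, a, b] := (M.Pi_assoc [] [M.inv b, M.inv a] [x, a, b] h5).symm
    _ = M.conj (M.conj x a) b := M.Pi_assoc [M.inv b] [M.inv a, x, a] [b] h5

lemma viaChain_Pi_pair (hc : M.viaChain Δ [a, b] X) :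
    M.viaChain Δ [M.Pi [a, b]] X ∧
      M.setConj X (M.Pi [a, b]) = M.setConj (M.setConj X a) b := by
  have hset : M.setConj X (M.Pi [a, b]) = M.setConj (M.setConj X a) b := by
    ext y
    constructor
    · rintro ⟨x, hx, rfl⟩
      exact ⟨M.conj x a, ⟨x, hx, rfl⟩, (hobj.conj_Pi_pair_of_viaChain hc hx).2⟩
    · rintro ⟨_, ⟨x, hx, rfl⟩, rfl⟩
      exact ⟨x, hx, (hobj.conj_Pi_pair_of_viaChain hc hx).2.symm⟩
  exact ⟨⟨hc.1, fun x hx => (hobj.conj_Pi_pair_of_viaChain hc hx).1, hset ▸ hc.2.2.2.2⟩, hset⟩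

end Objective

end Chains

section Locality

variable {Δ : Set (Set L)} {S P X Z : Set L} {a g o x y z : L}

/-- The axioms of a locality `(L, Δ, S)` that do not involve `p`. -/
structure IsObjectiveOver (M : PartialGroupOn L) (Δ : Set (Set L)) (S : Set L) : Prop where
  objective : M.Objective Δ
  mem : S ∈ Δ
  subset : ∀ X ∈ Δ, X ⊆ S

lemma inv_mem_Sg (hS : M.IsSubgroup S) (hx : x ∈ M.Sg S g) : M.inv x ∈ M.Sg S g := by
  obtain ⟨hxS, hD, hx'S⟩ := hx
  obtain ⟨hD', he⟩ := conj_inv hD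
  exact ⟨hS.inv_mem hxS, hD', he ▸ hS.inv_mem hx'S⟩

lemma one_mem_Sg (hS : M.IsSubgroup S) (g : L) : M.one ∈ M.Sg S g :=
  ⟨hS.one_mem, (conj_one_left g).1, by rw [(conj_one_left g).2]; exact hS.one_mem⟩

lemma IsLocality.isObjectiveOver {p : ℕ} (h : M.IsLocality p Δ S) :
    M.IsObjectiveOver Δ S := by
  obtain ⟨-, -, hSΔ, hΔS, hobj, -⟩ := h
  exact ⟨hobj, hSΔ, hΔS⟩

namespace IsObjectiveOver

variable (hΔ : M.IsObjectiveOver Δ S)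
include hΔ

lemma isSubgroup_S : M.IsSubgroup S := hΔ.objective.1 S hΔ.mem

lemma mem_of_subset (hX : X ∈ Δ) (hZ : M.IsSubgroup Z) (hXZ : X ⊆ Z) (hZS : Z ⊆ S) :
    Z ∈ Δ := by
  have hX' := hΔ.objective.1 X hX
  have h := hΔ.objective.2.2 X hX S hΔ.mem M.one
    (hX'.setConjDef_of_subset subset_rfl hX'.one_mem)
  rw [hX'.setConj_self hX'.one_mem] at h
  exact h hX' (hΔ.subset X hX) Z hZ hXZ hZS

lemma setConj_mem (hX : X ∈ Δ) (ha : a ∈ S) : M.setConj X a ∈ Δ := by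
  have hS := hΔ.isSubgroup_S
  have hXS := hΔ.subset X hX
  have hXa := hS.setConj_isSubgroup (hΔ.objective.1 X hX) hXS ha
  exact hΔ.objective.2.2 X hX S hΔ.mem a (hS.setConjDef_of_subset hXS ha) hXa
    (hS.setConj_subset hXS ha) _ hXa subset_rfl (hS.setConj_subset hXS ha)

lemma viaChain_singleton_of_mem (hX : X ∈ Δ) (ha : a ∈ S) : M.viaChain Δ [a] X :=
  ⟨hX, hΔ.isSubgroup_S.setConjDef_of_subset (hΔ.subset X hX) ha, hΔ.setConj_mem hX ha⟩

/-- With `u = Π(o, g) = Π(g, o^g)` and `g = Π(o⁻¹, u)`, the chains `P → P^g → P^{g o^g}` and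
`P^o → P → P^u` show that `P^o` is conjugated into `Δ` by `g`. -/
lemma viaChain_setConj_of_mem_Sg (hP : M.viaChain Δ [g] P) (ho : o ∈ M.Sg S g) :
    M.viaChain Δ [g] (M.setConj P o) := by
  obtain ⟨hoS, hog, ho'S⟩ := ho
  have hPu : M.viaChain Δ [M.Pi [o, g]] P := (Pi_mul_conj hog).2 ▸
    (hΔ.objective.viaChain_Pi_pair
      (viaChain_cons hP (hΔ.viaChain_singleton_of_mem hP.2.2 ho'S))).1
  have h := (hΔ.objective.viaChain_Pi_pair
    (viaChain_inv_cons (hΔ.viaChain_singleton_of_mem hP.1 hoS) hPu)).1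
  rwa [(Pi_inv_mul_cancel_left (mem_pair_of_mem_conj hog)).2] at h

lemma mul_mem_Sg (hx : x ∈ M.Sg S g) (hy : y ∈ M.Sg S g) :
    M.Pi [x, y] ∈ M.Sg S g ∧ M.conj (M.Pi [x, y]) g = M.Pi [M.conj x g, M.conj y g] := by
  have hS := hΔ.isSubgroup_S
  obtain ⟨P, hP⟩ := hΔ.objective.exists_viaChain g
  have hPx := hΔ.viaChain_setConj_of_mem_Sg hP hx
  have hPxy := hΔ.viaChain_setConj_of_mem_Sg hPx hy
  have h4 : [M.inv g, x, y, g] ∈ M.D := hΔ.objective.mem_D_of_viaChain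
    (viaChain_inv_cons hP (viaChain_cons (hΔ.viaChain_singleton_of_mem hP.1 hx.1)
      (viaChain_cons (hΔ.viaChain_singleton_of_mem hPx.1 hy.1) hPxy)))
  have h6 : [M.inv g, x, g, M.inv g, y, g] ∈ M.D := hΔ.objective.mem_D_of_viaChain
    (viaChain_inv_cons hP (viaChain_cons (hΔ.viaChain_singleton_of_mem hP.1 hx.1)
      (viaChain_cons hPx (viaChain_inv_cons hPx
        (viaChain_cons (hΔ.viaChain_singleton_of_mem hPx.1 hy.1) hPxy)))))
  obtain ⟨hD, he⟩ := conj_Pi_pair h4 h6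
  exact ⟨⟨hS.mul_mem hx.1 hy.1, hD, he ▸ hS.mul_mem hx.2.2 hy.2.2⟩, he⟩

lemma isSubgroup_Sg (g : L) : M.IsSubgroup (M.Sg S g) :=
  hΔ.isSubgroup_S.of_subset (fun _ hx => hx.1) ⟨_, one_mem_Sg hΔ.isSubgroup_S g⟩
    (fun _ hx => inv_mem_Sg hΔ.isSubgroup_S hx) (fun _ hx _ hy => (hΔ.mul_mem_Sg hx hy).1)

lemma isSubgroup_setConj_Sg (g : L) : M.IsSubgroup (M.setConj (M.Sg S g) g) := by
  have hS := hΔ.isSubgroup_S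
  refine hS.of_subset (by rintro _ ⟨x, hx, rfl⟩; exact hx.2.2) ⟨_, _, one_mem_Sg hS g, rfl⟩
    ?_ ?_
  · rintro _ ⟨x, hx, rfl⟩
    exact ⟨M.inv x, inv_mem_Sg hS hx, (conj_inv hx.2.1).2.symm⟩
  · rintro _ ⟨x, hx, rfl⟩ _ ⟨y, hy, rfl⟩
    exact ⟨M.Pi [x, y], (hΔ.mul_mem_Sg hx hy).1, (hΔ.mul_mem_Sg hx hy).2.symm⟩

lemma viaChain_Sg (g : L) : M.viaChain Δ [g] (M.Sg S g) := by
  obtain ⟨P, hPΔ, hPg, hQΔ⟩ := hΔ.objective.exists_viaChain g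
  have hPSg : P ⊆ M.Sg S g := fun a ha =>
    ⟨hΔ.subset P hPΔ ha, hPg a ha, hΔ.subset _ hQΔ ⟨a, ha, rfl⟩⟩
  refine ⟨hΔ.mem_of_subset hPΔ (hΔ.isSubgroup_Sg g) hPSg (fun _ hx => hx.1),
    fun x hx => hx.2.1, hΔ.mem_of_subset hQΔ (hΔ.isSubgroup_setConj_Sg g) ?_ ?_⟩
  · rintro _ ⟨a, ha, rfl⟩
    exact ⟨a, hPSg ha, rfl⟩
  · rintro _ ⟨x, hx, rfl⟩
    exact hx.2.2

lemma mem_D_of_setConj_Sg_eq (hz : z ∈ S) (h : M.setConj (M.Sg S g) z = M.Sg S g) :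
    [M.inv g, z, g] ∈ M.D := by
  have hT := hΔ.viaChain_Sg g
  exact hΔ.objective.mem_D_of_viaChain (viaChain_inv_cons hT
    (viaChain_cons (hΔ.viaChain_singleton_of_mem hT.1 hz) (h.symm ▸ hT)))

lemma subset_Sg_of_isPartialNormal {p : ℕ} (hp : p.Prime) (hpS : M.IsPSubgroup p S)
    (hX : M.IsSubgroup X) (hXS : X ⊆ S) (hXn : M.IsPartialNormal X) (g : L) :
    X ⊆ M.Sg S g := by
  refine hpS.subset_of_normalizer_subset hp hX hXS
    (fun x hx a ha => hXn.2 x hx a (hpS.1.setConjDef_of_subset hXS ha x hx))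
    (hΔ.isSubgroup_Sg g) (fun _ hx => hx.1) fun z hz hzn => ?_
  have hD := hΔ.mem_D_of_setConj_Sg_eq (hXS hz) hzn
  exact ⟨hXS hz, hD, hXS (hXn.2 z hz g hD)⟩

end IsObjectiveOver

end Locality

section Op

variable {Δ : Set (Set L)} {S T X : Set L} {x y : L}

lemma iInter_Sw_subset : ⋂ w, M.Sw S w ⊆ S := Set.iInter_subset _ []

lemma conj_mem_iInter_Sw (hx : x ∈ ⋂ w, M.Sw S w) (g : L) :
    [M.inv g, x, g] ∈ M.D ∧ M.conj x g ∈ ⋂ w, M.Sw S w := by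
  simp only [Set.mem_iInter] at hx ⊢
  exact ⟨(hx [g]).2.1, fun w => (hx (g :: w)).2.2⟩

lemma mem_Sg_of_mem_iInter_Sw (hx : x ∈ ⋂ w, M.Sw S w) (g : L) : x ∈ M.Sg S g :=
  ⟨iInter_Sw_subset hx, (conj_mem_iInter_Sw hx g).1,
    iInter_Sw_subset (conj_mem_iInter_Sw hx g).2⟩

lemma subset_iInter_Sw (hTS : T ⊆ S)
    (hT : ∀ x ∈ T, ∀ g, [M.inv g, x, g] ∈ M.D ∧ M.conj x g ∈ T) : T ⊆ ⋂ w, M.Sw S w := by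
  intro x hx
  rw [Set.mem_iInter]
  intro w
  induction w generalizing x with
  | nil => exact hTS hx
  | cons g w ih => exact ⟨hTS hx, (hT x hx g).1, ih (hT x hx g).2⟩

lemma one_mem_iInter_Sw (hS : M.IsSubgroup S) : M.one ∈ ⋂ w, M.Sw S w :=
  subset_iInter_Sw (T := {M.one}) (by simpa using hS.one_mem)
    (by rintro _ rfl g; simpa using conj_one_left g) rfl

lemma inv_mem_iInter_Sw (hS : M.IsSubgroup S) (hx : x ∈ ⋂ w, M.Sw S w) :
    M.inv x ∈ ⋂ w, M.Sw S w := by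
  refine subset_iInter_Sw (T := M.inv '' ⋂ w, M.Sw S w) ?_ ?_ ⟨x, hx, rfl⟩
  · rintro _ ⟨y, hy, rfl⟩
    exact hS.inv_mem (iInter_Sw_subset hy)
  · rintro _ ⟨y, hy, rfl⟩ g
    obtain ⟨hD, hy'⟩ := conj_mem_iInter_Sw hy g
    exact ⟨(conj_inv hD).1, (conj_inv hD).2 ▸ ⟨_, hy', rfl⟩⟩

lemma IsObjectiveOver.mul_mem_iInter_Sw (hΔ : M.IsObjectiveOver Δ S)
    (hx : x ∈ ⋂ w, M.Sw S w) (hy : y ∈ ⋂ w, M.Sw S w) : M.Pi [x, y] ∈ ⋂ w, M.Sw S w := by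
  refine subset_iInter_Sw (T := {z | ∃ x ∈ ⋂ w, M.Sw S w, ∃ y ∈ ⋂ w, M.Sw S w, z = M.Pi [x, y]})
    ?_ ?_ ⟨x, hx, y, hy, rfl⟩
  · rintro _ ⟨x, hx, y, hy, rfl⟩
    exact hΔ.isSubgroup_S.mul_mem (iInter_Sw_subset hx) (iInter_Sw_subset hy)
  · rintro _ ⟨x, hx, y, hy, rfl⟩ g
    obtain ⟨⟨-, hD, -⟩, he⟩ :=
      hΔ.mul_mem_Sg (mem_Sg_of_mem_iInter_Sw hx g) (mem_Sg_of_mem_iInter_Sw hy g)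
    exact ⟨hD, _, (conj_mem_iInter_Sw hx g).2, _, (conj_mem_iInter_Sw hy g).2, he⟩

lemma IsObjectiveOver.isSubgroup_iInter_Sw (hΔ : M.IsObjectiveOver Δ S) :
    M.IsSubgroup (⋂ w, M.Sw S w) :=
  hΔ.isSubgroup_S.of_subset iInter_Sw_subset ⟨_, one_mem_iInter_Sw hΔ.isSubgroup_S⟩
    (fun _ hx => inv_mem_iInter_Sw hΔ.isSubgroup_S hx)
    (fun _ hx _ hy => hΔ.mul_mem_iInter_Sw hx hy)

lemma IsObjectiveOver.isPartialNormal_iInter_Sw (hΔ : M.IsObjectiveOver Δ S) :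
    M.IsPartialNormal (⋂ w, M.Sw S w) :=
  ⟨hΔ.isSubgroup_iInter_Sw.1, fun _ hx g _ => (conj_mem_iInter_Sw hx g).2⟩

lemma IsObjectiveOver.subset_iInter_Sw_of_isPartialNormal (hΔ : M.IsObjectiveOver Δ S)
    {p : ℕ} (hp : p.Prime) (hpS : M.IsPSubgroup p S) (hX : M.IsSubgroup X) (hXS : X ⊆ S)
    (hXn : M.IsPartialNormal X) : X ⊆ ⋂ w, M.Sw S w :=
  subset_iInter_Sw hXS fun x hx g =>
    have hD := (hΔ.subset_Sg_of_isPartialNormal hp hpS hX hXS hXn g hx).2.1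
    ⟨hD, hXn.2 x hx g hD⟩

end Op

end PartialGroupOn

open PartialGroupOn

variable {L : Type u}

theorem Op_largest_normal_psubgroup (M : PartialGroupOn L) (p : ℕ)
    (Δ : Set (Set L)) (S : Set L) (hloc : M.IsLocality p Δ S) :
    M.IsSubgroup (⋂ w : List L, M.Sw S w) ∧
    (⋂ w : List L, M.Sw S w) ⊆ S ∧
    M.IsPartialNormal (⋂ w : List L, M.Sw S w) ∧
    ∀ X : Set L, M.IsSubgroup X → X ⊆ S → M.IsPartialNormal X →
      X ⊆ ⋂ w : List L, M.Sw S w := by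
  have hΔ := hloc.isObjectiveOver
  obtain ⟨hp, -, -, -, -, hpS, -⟩ := hloc
  exact ⟨hΔ.isSubgroup_iInter_Sw, iInter_Sw_subset, hΔ.isPartialNormal_iInter_Sw,
    fun X hX hXS hXn => hΔ.subset_iInter_Sw_of_isPartialNormal hp hpS hX hXS hXn⟩
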